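/- arXiv:1607.02188 — 4 statements merged into one kernel-verified Lean document; each statement's English description precedes it below -/
import Mathlib

section
/- The continuous ranked probability score satisfies the kernel identity: for a cumulative distribution function F with finite first moment and any x ∈ ℝ, -∫_{-∞}^{∞} (F(y) − 1{y ≥ x})² dy = (1/2) E[|Y − Y'|] − E[|Y − x|], where Y, Y' are independent random variables with distribution F. -/
/-!
Write `H a y = 1{a ≤ y}`, so that `cdf μ y = ∫ H z y dμ(z)`. Squaring, `(cdf μ y - H x y)²` is the
`μ ⊗ μ`-integral of `(H Y y - H x y) (H Y' y - H x y)`. Integrating in `y` first (Fubini), polarization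
and `∫ (H a - H b)² = |a - b|` turn this kernel into `(|Y - x| + |Y' - x| - |Y - Y'|) / 2`.
Fubini applies because the kernel is dominated by `(H Y y - H x y)²`, whose `y`-integral `|Y - x|`
is integrable by the first-moment assumption.
-/

open MeasureTheory ProbabilityTheory Set

noncomputable def step (a y : ℝ) : ℝ := if a ≤ y then 1 else 0

lemma measurable_step : Measurable (fun p : ℝ × ℝ => step p.1 p.2) :=
  Measurable.ite (measurableSet_le measurable_fst measurable_snd) measurable_const measurable_const

lemma step_sub_step_sq (a b : ℝ) :
    (fun y => (step a y - step b y) ^ 2) = (Ico (min a b) (max a b)).indicator 1 := by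
  funext y
  simp only [step, indicator, mem_Ico, min_le_iff, lt_max_iff, Pi.one_apply]
  split_ifs <;> grind

lemma integrable_step_sub_step_sq (a b : ℝ) :
    Integrable (fun y => (step a y - step b y) ^ 2) := by
  rw [step_sub_step_sq, integrable_indicator_iff measurableSet_Ico]
  exact integrableOn_const measure_Ico_lt_top.ne

lemma integral_step_sub_step_sq (a b : ℝ) : ∫ y, (step a y - step b y) ^ 2 = |a - b| := by
  rw [step_sub_step_sq, integral_indicator_one measurableSet_Ico,
    Real.volume_real_Ico_of_le min_le_max, max_sub_min_eq_abs, abs_sub_comm]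

lemma integral_step_sub_mul_step_sub (a b x : ℝ) :
    ∫ y, (step a y - step x y) * (step b y - step x y) = (|a - x| + |b - x| - |a - b|) / 2 := by
  have polarization : ∀ y, (step a y - step x y) * (step b y - step x y) =
      ((step a y - step x y) ^ 2 + (step b y - step x y) ^ 2 - (step a y - step b y) ^ 2) / 2 :=
    fun y => by ring
  have hax := integrable_step_sub_step_sq a x
  have hbx := integrable_step_sub_step_sq b x
  have hsum : Integrable fun y => (step a y - step x y) ^ 2 + (step b y - step x y) ^ 2 :=
    hax.add hbx
  simp_rw [polarization]
  rw [integral_div, integral_sub hsum (integrable_step_sub_step_sq a b),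
    integral_add hax hbx, integral_step_sub_step_sq, integral_step_sub_step_sq,
    integral_step_sub_step_sq]

lemma abs_step_sub_mul_step_sub_le (a b x y : ℝ) :
    |(step a y - step x y) * (step b y - step x y)| ≤ (step a y - step x y) ^ 2 := by
  unfold step
  split_ifs <;> norm_num

lemma integrable_step_sub_mul_step_sub (ν : Measure (ℝ × ℝ)) [SFinite ν] (x : ℝ)
    (h : Integrable (fun p => |p.1 - x|) ν) :
    Integrable (fun q : (ℝ × ℝ) × ℝ =>
      (step q.1.1 q.2 - step x q.2) * (step q.1.2 q.2 - step x q.2)) (ν.prod volume) := by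
  have measurable_step_sub (f : (ℝ × ℝ) × ℝ → ℝ) (hf : Measurable f) :
      Measurable (fun q : (ℝ × ℝ) × ℝ => step (f q) q.2 - step x q.2) :=
    (measurable_step.comp (hf.prodMk measurable_snd)).sub
      (measurable_step.comp (measurable_const.prodMk measurable_snd))
  have hdom : Integrable (fun q : (ℝ × ℝ) × ℝ => (step q.1.1 q.2 - step x q.2) ^ 2)
      (ν.prod volume) := by
    rw [integrable_prod_iff
      ((measurable_step_sub _ measurable_fst.fst).pow_const 2).aestronglyMeasurable]
    refine ⟨.of_forall fun p => integrable_step_sub_step_sq p.1 x, h.congr (.of_forall fun p => ?_)⟩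
    simp only [Real.norm_eq_abs, abs_sq]
    rw [integral_step_sub_step_sq]
  refine hdom.mono' ?_ (.of_forall fun q => abs_step_sub_mul_step_sub_le _ _ _ _)
  exact ((measurable_step_sub _ measurable_fst.fst).mul
    (measurable_step_sub _ measurable_fst.snd)).aestronglyMeasurable

lemma cdf_sub_step_eq_integral (μ : Measure ℝ) [IsProbabilityMeasure μ] (x y : ℝ) :
    cdf μ y - step x y = ∫ z, (step z y - step x y) ∂μ := by
  have hstep : (fun z => step z y) = (Iic y).indicator 1 := by
    funext z
    simp [step, indicator]
  rw [integral_sub _ (integrable_const _), hstep, integral_indicator_one measurableSet_Iic,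
    integral_const, cdf_eq_real]
  · simp
  · rw [hstep, integrable_indicator_iff measurableSet_Iic]
    exact integrableOn_const (measure_ne_top _ _)

lemma sq_cdf_sub_step_eq_integral_prod (μ : Measure ℝ) [IsProbabilityMeasure μ] (x y : ℝ) :
    (cdf μ y - step x y) ^ 2 =
      ∫ p, (step p.1 y - step x y) * (step p.2 y - step x y) ∂(μ.prod μ) := by
  rw [integral_prod_mul (fun z => step z y - step x y) (fun z => step z y - step x y),
    ← cdf_sub_step_eq_integral, sq]

/-- CRPS kernel identity: for a distribution `μ` on ℝ with finite first moment,
cdf `F` and any `x ∈ ℝ`,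
`-∫ (F(y) - 1{y ≥ x})² dy = (1/2) E[|Y - Y'|] - E[|Y - x|]`
where `Y, Y'` are i.i.d. with distribution `μ`. -/
theorem crps_kernel_identity (μ : Measure ℝ) [IsProbabilityMeasure μ]
    (hint : Integrable (fun y => |y|) μ) (x : ℝ) :
    -∫ y, (cdf μ y - (if x ≤ y then (1:ℝ) else 0))^2 =
      (1/2) * (∫ p, |p.1 - p.2| ∂(μ.prod μ)) - ∫ y, |y - x| ∂μ := by
  have hid : Integrable id μ := (integrable_norm_iff aestronglyMeasurable_id).1 hint
  have hfst : Integrable (fun p : ℝ × ℝ => |p.1 - x|) (μ.prod μ) :=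
    (hid.sub (integrable_const x)).abs.comp_fst μ
  have hsnd : Integrable (fun p : ℝ × ℝ => |p.2 - x|) (μ.prod μ) :=
    (hid.sub (integrable_const x)).abs.comp_snd μ
  have hdiff : Integrable (fun p : ℝ × ℝ => |p.1 - p.2|) (μ.prod μ) :=
    ((hid.comp_fst μ).sub (hid.comp_snd μ)).abs
  have hsum : Integrable (fun p : ℝ × ℝ => |p.1 - x| + |p.2 - x|) (μ.prod μ) := hfst.add hsnd
  calc -∫ y, (cdf μ y - step x y) ^ 2
      = -∫ y, ∫ p, (step p.1 y - step x y) * (step p.2 y - step x y) ∂(μ.prod μ) := by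
        simp_rw [sq_cdf_sub_step_eq_integral_prod]
    _ = -∫ p, (∫ y, (step p.1 y - step x y) * (step p.2 y - step x y)) ∂(μ.prod μ) := by
        rw [← integral_integral_swap (integrable_step_sub_mul_step_sub _ x hfst)]
    _ = -∫ p, (|p.1 - x| + |p.2 - x| - |p.1 - p.2|) / 2 ∂(μ.prod μ) := by
        simp_rw [integral_step_sub_mul_step_sub]
    _ = _ := by
      rw [integral_div, integral_sub hsum hdiff, integral_add hfst hsnd,
        integral_fun_fst (fun z => |z - x|), integral_fun_snd (fun z => |z - x|)]
      simp only [probReal_univ, one_smul]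
      ring
end

section
/- A normal variance-mean mixture with GIG mixing has density obtained by Bessel integration: if X | V ~ N(λ + β V, V Σ) in ℝ^d with Σ positive definite and V ~ GIG(ν, a, b), then the density of X at x equals (|Σ|^{-1/2} / (2π)^{d/2}) (a/b)^{ν/2} exp((x − λ)^T Σ^{-1} β) · (b̂/â)^{ν̂/2} K_{ν̂}(√(âb̂)) / K_ν(√(ab)), where ν̂ = ν − d/2, â = β^T Σ^{-1} β + a, b̂ = (x − λ)^T Σ^{-1} (x − λ) + b. -/
/-!
Expanding the quadratic form `(x - λ - vβ)ᵀ (vΣ)⁻¹ (x - λ - vβ)` shows that, for fixed `x`, the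
conditional Gaussian density is `exp ((x - λ)ᵀ Σ⁻¹ β)` times the GIG kernel
`v ^ (-d/2) exp (-(βᵀΣ⁻¹β v + (x - λ)ᵀΣ⁻¹(x - λ) / v) / 2)`. GIG kernels multiply by adding
their parameters, so the mixture integral is the normalising integral of the kernel with
parameters `(ν̂, â, b̂)`, and the substitution `v = b̂ / (2t)` turns that integral into the
Schläfli integral defining `K_ν̂`.
-/

open MeasureTheory Real Matrix

/-- Modified Bessel function of the second kind. -/
noncomputable def besselK (ν z : ℝ) : ℝ :=
  (1/2) * (z/2) ^ ν * ∫ t in Set.Ioi (0:ℝ), t ^ (-ν - 1) * Real.exp (-t - z^2 / (4*t))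

/-- Density of the GIG(ν, a, b) distribution. -/
noncomputable def gigPdf (ν a b v : ℝ) : ℝ :=
  if 0 < v then
    (a/b) ^ (ν/2) * v ^ (ν-1) / (2 * besselK ν (Real.sqrt (a*b))) *
      Real.exp (-(a*v)/2 - b/(2*v))
  else 0

/-- Multivariate Gaussian density with mean `m` and covariance matrix `S`. -/
noncomputable def mvnPdf {d : ℕ} (m : Fin d → ℝ) (S : Matrix (Fin d) (Fin d) ℝ)
    (x : Fin d → ℝ) : ℝ :=
  (2*Real.pi) ^ (-(d:ℝ)/2) * S.det ^ (-(1:ℝ)/2) *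
    Real.exp (-(1/2) * ((x - m) ⬝ᵥ (S⁻¹ *ᵥ (x - m))))

open Set

theorem integral_Ioi_comp_const_div {E : Type*} [NormedAddCommGroup E] [NormedSpace ℝ E]
    (f : ℝ → E) {c : ℝ} (hc : 0 < c) :
    ∫ t in Ioi 0, (c / t ^ 2) • f (c / t) = ∫ v in Ioi 0, f v := by
  have himage : (c / ·) '' Ioi 0 = Ioi (0 : ℝ) := by
    ext v
    refine ⟨?_, fun hv => ⟨c / v, div_pos hc hv, div_div_cancel₀ hc.ne'⟩⟩
    rintro ⟨t, ht, rfl⟩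
    exact div_pos hc ht
  have hinj : InjOn (c / ·) (Ioi (0 : ℝ)) := fun s _ t _ h =>
    inv_injective (mul_left_cancel₀ hc.ne' h)
  have hderiv : ∀ t ∈ Ioi (0 : ℝ), HasDerivWithinAt (c / ·) (-(c / t ^ 2)) (Ioi 0) t := by
    intro t ht
    have h := (hasDerivAt_inv (ne_of_gt ht)).const_mul c
    simp only [← div_eq_mul_inv, mul_neg] at h
    exact h.hasDerivWithinAt
  have h := integral_image_eq_integral_abs_deriv_smul measurableSet_Ioi hderiv hinj f
  rw [himage] at h
  rw [h]
  refine setIntegral_congr_fun measurableSet_Ioi fun t ht => ?_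
  rw [abs_neg, abs_of_pos (div_pos hc (pow_pos ht 2))]

noncomputable def gigKernel (μ A B v : ℝ) : ℝ :=
  v ^ (μ - 1) * exp (-(A * v) / 2 - B / (2 * v))

theorem gigKernel_mul_gigKernel {v : ℝ} (hv : 0 < v) (μ A B μ' A' B' : ℝ) :
    gigKernel μ A B v * gigKernel μ' A' B' v = gigKernel (μ + μ' - 1) (A + A') (B + B') v := by
  have hpow : v ^ (μ - 1) * v ^ (μ' - 1) = v ^ (μ + μ' - 1 - 1) := by
    rw [← rpow_add hv]
    ring_nf
  have hexp : (-(A * v) / 2 - B / (2 * v)) + (-(A' * v) / 2 - B' / (2 * v)) =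
      -((A + A') * v) / 2 - (B + B') / (2 * v) := by
    ring
  rw [gigKernel, gigKernel, gigKernel, ← hpow, ← hexp, exp_add]
  ring

theorem const_div_sq_mul_rpow_const_div {c t : ℝ} (hc : 0 < c) (ht : 0 < t) (μ : ℝ) :
    c / t ^ 2 * (c / t) ^ (μ - 1) = c ^ μ * t ^ (-μ - 1) := by
  rw [div_rpow hc.le ht.le, rpow_sub_one hc.ne', rpow_sub_one ht.ne', sub_eq_add_neg,
    rpow_add ht, rpow_neg ht.le, rpow_neg_one]
  field_simp

theorem integral_gigKernel {A B : ℝ} (hA : 0 < A) (hB : 0 < B) (μ : ℝ) :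
    ∫ v in Ioi 0, gigKernel μ A B v = 2 * (B / A) ^ (μ / 2) * besselK μ (√(A * B)) := by
  have hc : 0 < B / 2 := half_pos hB
  have hsubst : ∀ t ∈ Ioi (0 : ℝ), (B / 2 / t ^ 2) • gigKernel μ A B (B / 2 / t) =
      (B / 2) ^ μ * (t ^ (-μ - 1) * exp (-t - √(A * B) ^ 2 / (4 * t))) := by
    intro t ht
    have hexp :
        -(A * (B / 2 / t)) / 2 - B / (2 * (B / 2 / t)) = -t - √(A * B) ^ 2 / (4 * t) := by
      rw [sq_sqrt (mul_pos hA hB).le]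
      field_simp
      ring
    rw [smul_eq_mul, gigKernel, hexp, ← mul_assoc, const_div_sq_mul_rpow_const_div hc ht, mul_assoc]
  have hconst : (B / 2) ^ μ = 2 * (B / A) ^ (μ / 2) * (1 / 2 * (√(A * B) / 2) ^ μ) := by
    have hroot : √(B / A) * (√(A * B) / 2) = B / 2 := by
      rw [mul_div_assoc', ← sqrt_mul (div_pos hB hA).le, show B / A * (A * B) = B ^ 2 by
        field_simp, sqrt_sq hB.le]
    rw [← hroot, mul_rpow (sqrt_nonneg _) (by positivity), sqrt_eq_rpow,
      ← rpow_mul (div_pos hB hA).le]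
    ring_nf
  rw [← integral_Ioi_comp_const_div _ hc, setIntegral_congr_fun measurableSet_Ioi hsubst,
    integral_const_mul, besselK, hconst]
  ring

theorem gigPdf_of_pos {v : ℝ} (hv : 0 < v) (ν a b : ℝ) :
    gigPdf ν a b v = (a / b) ^ (ν / 2) / (2 * besselK ν (√(a * b))) * gigKernel ν a b v := by
  rw [gigPdf, if_pos hv, gigKernel]
  ring

section Quadratic

variable {n : Type*} [Fintype n] {M : Matrix n n ℝ}

theorem Matrix.IsSymm.dotProduct_mulVec_comm (hM : M.IsSymm) (u w : n → ℝ) :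
    u ⬝ᵥ M *ᵥ w = w ⬝ᵥ M *ᵥ u := by
  rw [dotProduct_mulVec, ← hM.eq, vecMul_transpose, dotProduct_comm, hM.eq]

theorem Matrix.IsSymm.dotProduct_mulVec_sub_smul (hM : M.IsSymm) (y β : n → ℝ) (v : ℝ) :
    (y - v • β) ⬝ᵥ M *ᵥ (y - v • β) =
      y ⬝ᵥ M *ᵥ y - 2 * v * (y ⬝ᵥ M *ᵥ β) + v ^ 2 * (β ⬝ᵥ M *ᵥ β) := by
  simp only [mulVec_sub, mulVec_smul, dotProduct_sub, sub_dotProduct, dotProduct_smul,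
    smul_dotProduct, smul_eq_mul, hM.dotProduct_mulVec_comm β y]
  ring

end Quadratic

theorem mvnPdf_add_smul_smul {d : ℕ} {S : Matrix (Fin d) (Fin d) ℝ} (hS : S.PosDef)
    (lam β x : Fin d → ℝ) {v : ℝ} (hv : 0 < v) :
    mvnPdf (lam + v • β) (v • S) x =
      (2 * π) ^ (-(d : ℝ) / 2) * S.det ^ (-(1 : ℝ) / 2) * exp ((x - lam) ⬝ᵥ S⁻¹ *ᵥ β) *
        gigKernel (1 - d / 2) (β ⬝ᵥ S⁻¹ *ᵥ β) ((x - lam) ⬝ᵥ S⁻¹ *ᵥ (x - lam)) v := by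
  have hsymm : S⁻¹.IsSymm := (isHermitian_iff_isSymm.mp hS.isHermitian).inv
  have hdet : (v • S).det ^ (-(1 : ℝ) / 2) = v ^ (-(d : ℝ) / 2) * S.det ^ (-(1 : ℝ) / 2) := by
    rw [det_smul, Fintype.card_fin, mul_rpow (by positivity) hS.det_pos.le, ← rpow_natCast,
      ← rpow_mul hv.le]
    ring_nf
  have hinv : (v • S)⁻¹ = v⁻¹ • S⁻¹ := by
    have : Invertible v := invertibleOfNonzero hv.ne'
    rw [Matrix.inv_smul S v (isUnit_iff_ne_zero.mpr hS.det_pos.ne'), invOf_eq_inv]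
  rw [mvnPdf, hdet, hinv, sub_add_eq_sub_sub, smul_mulVec, dotProduct_smul, smul_eq_mul,
    hsymm.dotProduct_mulVec_sub_smul, gigKernel, show (1 - d / 2 - 1 : ℝ) = -d / 2 by ring]
  have hexp : ∀ q c p : ℝ, -(1 / 2) * (v⁻¹ * (q - 2 * v * c + v ^ 2 * p)) =
      c + (-(p * v) / 2 - q / (2 * v)) := by
    intro q c p
    field_simp
    ring
  rw [hexp, exp_add]
  ring

/-- Generalized hyperbolic density by Bessel integration: if `X | V ~ N(λ + βV, V Σ)`
and `V ~ GIG(ν, a, b)`, the density of `X` at `x` is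
`|Σ|^{-1/2}/(2π)^{d/2} (a/b)^{ν/2} exp((x−λ)ᵀΣ⁻¹β) (b̂/â)^{ν̂/2} K_ν̂(√(âb̂))/K_ν(√(ab))`,
with `ν̂ = ν − d/2`, `â = βᵀΣ⁻¹β + a`, `b̂ = (x−λ)ᵀΣ⁻¹(x−λ) + b`. -/
theorem gh_density {d : ℕ} (lam beta : Fin d → ℝ) (S : Matrix (Fin d) (Fin d) ℝ)
    (hS : S.PosDef) (ν a b : ℝ) (ha : 0 < a) (hb : 0 < b) (x : Fin d → ℝ) :
    ∫ v in Set.Ioi (0:ℝ), mvnPdf (lam + v • beta) (v • S) x * gigPdf ν a b v =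
      S.det ^ (-(1:ℝ)/2) / (2*Real.pi) ^ ((d:ℝ)/2) * (a/b) ^ (ν/2) *
        Real.exp ((x - lam) ⬝ᵥ (S⁻¹ *ᵥ beta)) *
        (((x - lam) ⬝ᵥ (S⁻¹ *ᵥ (x - lam)) + b) / (beta ⬝ᵥ (S⁻¹ *ᵥ beta) + a))
          ^ ((ν - (d:ℝ)/2)/2) *
        besselK (ν - (d:ℝ)/2)
          (Real.sqrt ((beta ⬝ᵥ (S⁻¹ *ᵥ beta) + a) *
            ((x - lam) ⬝ᵥ (S⁻¹ *ᵥ (x - lam)) + b))) /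
        besselK ν (Real.sqrt (a*b)) := by
  have hp : 0 ≤ beta ⬝ᵥ S⁻¹ *ᵥ beta := by
    simpa using hS.inv.posSemidef.dotProduct_mulVec_nonneg beta
  have hq : 0 ≤ (x - lam) ⬝ᵥ S⁻¹ *ᵥ (x - lam) := by
    simpa using hS.inv.posSemidef.dotProduct_mulVec_nonneg (x - lam)
  have hintegrand : ∀ v ∈ Ioi (0 : ℝ), mvnPdf (lam + v • beta) (v • S) x * gigPdf ν a b v =
      (2 * π) ^ (-(d : ℝ) / 2) * S.det ^ (-(1 : ℝ) / 2) * exp ((x - lam) ⬝ᵥ S⁻¹ *ᵥ beta) *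
        ((a / b) ^ (ν / 2) / (2 * besselK ν (√(a * b)))) *
        gigKernel (ν - d / 2) (beta ⬝ᵥ S⁻¹ *ᵥ beta + a)
          ((x - lam) ⬝ᵥ S⁻¹ *ᵥ (x - lam) + b) v := by
    intro v hv
    rw [mvnPdf_add_smul_smul hS lam beta x hv, gigPdf_of_pos hv, mul_mul_mul_comm,
      gigKernel_mul_gigKernel hv, show (1 - d / 2 + ν - 1 : ℝ) = ν - d / 2 by ring]
  rw [setIntegral_congr_fun measurableSet_Ioi hintegrand, integral_const_mul,
    integral_gigKernel (by linarith) (by linarith), neg_div, rpow_neg (by positivity)]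
  ring
end

section
/- The multivariate NIG density: if X = λ + β V + √V Q^{-1/2} Z with V ~ IG(τ, √(τ/2)) and Z ~ N(0, I_d) independent, then X has density f(x) = √(τ |Q|) / (2π)^{(d+1)/2} · exp((x − λ)^T Q β + √(2τ)) · 2 K_ν(√(ab)) (b/a)^{ν/2}, where ν = −(d+1)/2, a = β^T Q β + 2, b = (x − λ)^T Q (x − λ) + τ. -/
/-!
Given `V = v`, the integrand is a Gaussian density with covariance `v Q⁻¹` times the inverse
Gaussian density. Expanding the quadratic form in `x - λ - vβ` separates the `v`-independent
factor `exp((x−λ)ᵀQβ + √(2τ))`, and what remains is `v^(ν-1) exp(-(a v + b/v)/2)`, a generalized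
inverse Gaussian kernel. The substitution `v = b/(2t)` turns its integral into the integral
representation of `K_ν` that defines `besselK`.
-/

open MeasureTheory Real Matrix

/-- Density of the inverse Gaussian distribution IG(τ, δ). -/
noncomputable def igPdf (τ δ v : ℝ) : ℝ :=
  if 0 < v then
    Real.sqrt τ / Real.sqrt (2*Real.pi*v^3) * Real.exp (-(τ*(v - δ)^2)/(2*δ^2*v))
  else 0

theorem integral_comp_div_Ioi {E : Type*} [NormedAddCommGroup E] [NormedSpace ℝ E]
    (g : ℝ → E) {c : ℝ} (hc : 0 < c) :
    ∫ t in Set.Ioi (0:ℝ), (c / t ^ 2) • g (c / t) = ∫ t in Set.Ioi (0:ℝ), g t := by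
  have hinv := integral_comp_rpow_Ioi (fun s => g (c * s)) (by norm_num : (-1:ℝ) ≠ 0)
  rw [integral_comp_mul_left_Ioi g 0 hc, mul_zero] at hinv
  rw [← smul_inv_smul₀ hc.ne' (∫ t in Set.Ioi (0:ℝ), g t), ← hinv, ← integral_smul]
  refine setIntegral_congr_fun measurableSet_Ioi fun t (ht : 0 < t) => ?_
  rw [smul_smul, Real.rpow_neg_one, ← div_eq_mul_inv, show (-1:ℝ) - 1 = -2 by norm_num,
    Real.rpow_neg ht.le, abs_neg, abs_one, one_mul, Real.rpow_two, ← div_eq_mul_inv]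

theorem integral_rpow_mul_exp_eq_besselK (ν : ℝ) {a b : ℝ} (ha : 0 < a) (hb : 0 < b) :
    ∫ v in Set.Ioi (0:ℝ), v ^ (ν - 1) * Real.exp (-(a * v + b / v) / 2)
      = 2 * besselK ν (Real.sqrt (a * b)) * (b / a) ^ (ν / 2) := by
  have hc : 0 < b / 2 := by positivity
  have hsubst : ∀ t ∈ Set.Ioi (0:ℝ),
      (b / 2 / t ^ 2) • ((b / 2 / t) ^ (ν - 1) * Real.exp (-(a * (b / 2 / t) + b / (b / 2 / t)) / 2))
        = (b / 2) ^ ν * (t ^ (-ν - 1) * Real.exp (-t - Real.sqrt (a * b) ^ 2 / (4 * t))) := by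
    intro t (ht : 0 < t)
    have hexp : -(a * (b / 2 / t) + b / (b / 2 / t)) / 2 = -t - a * b / (4 * t) := by
      field_simp; ring
    rw [Real.sq_sqrt (by positivity), smul_eq_mul, hexp, Real.div_rpow hc.le ht.le,
      Real.rpow_sub hc, Real.rpow_sub ht, Real.rpow_sub ht, Real.rpow_neg ht.le, Real.rpow_one,
      Real.rpow_one]
    field_simp
  have hscale : (Real.sqrt (a * b) / 2) ^ ν * (b / a) ^ (ν / 2) = (b / 2) ^ ν := by
    have hsqrt : Real.sqrt (a * b) / 2 * Real.sqrt (b / a) = b / 2 := by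
      rw [div_mul_eq_mul_div, ← Real.sqrt_mul (by positivity),
        show a * b * (b / a) = b ^ 2 by field_simp, Real.sqrt_sq hb.le]
    rw [← hsqrt, Real.mul_rpow (by positivity) (by positivity), Real.sqrt_eq_rpow (b / a),
      ← Real.rpow_mul (by positivity)]
    ring_nf
  rw [← integral_comp_div_Ioi _ hc, setIntegral_congr_fun measurableSet_Ioi hsubst,
    integral_const_mul, besselK, ← hscale]
  ring

theorem mvnPdf_smul_inv {d : ℕ} (m x : Fin d → ℝ) {Q : Matrix (Fin d) (Fin d) ℝ}
    (hQ : 0 < Q.det) {v : ℝ} (hv : 0 < v) :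
    mvnPdf m (v • Q⁻¹) x
      = Real.sqrt Q.det / (2 * Real.pi * v) ^ ((d:ℝ) / 2) *
        Real.exp (-((x - m) ⬝ᵥ (Q *ᵥ (x - m))) / (2 * v)) := by
  have hQu : IsUnit Q.det := hQ.ne'.isUnit
  have hinv : (v • Q⁻¹)⁻¹ = v⁻¹ • Q :=
    Matrix.inv_eq_left_inv (by simp [smul_smul, hv.ne', Q.mul_nonsing_inv hQu])
  have hdet : (v • Q⁻¹).det ^ (-(1:ℝ) / 2) = v ^ (-(d:ℝ) / 2) * Real.sqrt Q.det := by
    rw [Matrix.det_smul, Matrix.det_nonsing_inv, Ring.inverse_eq_inv, Fintype.card_fin,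
      Real.mul_rpow (by positivity) (by positivity), ← Real.rpow_natCast, ← Real.rpow_mul hv.le,
      Real.inv_rpow hQ.le, ← Real.rpow_neg hQ.le, Real.sqrt_eq_rpow]
    ring_nf
  have hnorm : (2 * Real.pi) ^ (-(d:ℝ) / 2) * v ^ (-(d:ℝ) / 2)
      = ((2 * Real.pi * v) ^ ((d:ℝ) / 2))⁻¹ := by
    rw [← Real.mul_rpow (by positivity) hv.le, neg_div, Real.rpow_neg (by positivity)]
  have hquad : -(1/2) * ((x - m) ⬝ᵥ ((v⁻¹ • Q) *ᵥ (x - m)))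
      = -((x - m) ⬝ᵥ (Q *ᵥ (x - m))) / (2 * v) := by
    rw [Matrix.smul_mulVec, dotProduct_smul, smul_eq_mul]
    field_simp
  rw [mvnPdf, hinv, hdet, hquad, ← mul_assoc, hnorm]
  ring

theorem igPdf_of_pos {τ δ v : ℝ} (hδ : δ ≠ 0) (hv : 0 < v) :
    igPdf τ δ v = Real.sqrt τ / Real.sqrt (2 * Real.pi * v ^ 3) *
      Real.exp (τ / δ - τ / (2 * δ ^ 2) * v - τ / (2 * v)) := by
  rw [igPdf, if_pos hv]
  congr 2
  field_simp
  ring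

theorem Matrix.IsSymm.dotProduct_mulVec_sub_smul_s10 {R n : Type*} [CommRing R] [Fintype n]
    {Q : Matrix n n R} (hQ : Q.IsSymm) (y w : n → R) (v : R) :
    (y - v • w) ⬝ᵥ (Q *ᵥ (y - v • w))
      = y ⬝ᵥ (Q *ᵥ y) - 2 * v * (y ⬝ᵥ (Q *ᵥ w)) + v ^ 2 * (w ⬝ᵥ (Q *ᵥ w)) := by
  have hcomm : w ⬝ᵥ (Q *ᵥ y) = y ⬝ᵥ (Q *ᵥ w) := by
    rw [dotProduct_mulVec, ← mulVec_transpose, hQ.eq, dotProduct_comm]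
  simp only [mulVec_sub, mulVec_smul, dotProduct_sub, sub_dotProduct, dotProduct_smul,
    smul_dotProduct, smul_eq_mul, hcomm]
  ring

theorem mvnPdf_mul_igPdf {d : ℕ} (lam beta x : Fin d → ℝ) {Q : Matrix (Fin d) (Fin d) ℝ}
    (hQ : Q.PosDef) {τ : ℝ} (hτ : 0 < τ) {v : ℝ} (hv : 0 < v) :
    mvnPdf (lam + v • beta) (v • Q⁻¹) x * igPdf τ (Real.sqrt (τ / 2)) v
      = Real.sqrt (τ * Q.det) / (2 * Real.pi) ^ (((d:ℝ) + 1) / 2) *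
          Real.exp ((x - lam) ⬝ᵥ (Q *ᵥ beta) + Real.sqrt (2 * τ)) *
        (v ^ (-((d:ℝ) + 1) / 2 - 1) *
          Real.exp (-((beta ⬝ᵥ (Q *ᵥ beta) + 2) * v +
            ((x - lam) ⬝ᵥ (Q *ᵥ (x - lam)) + τ) / v) / 2)) := by
  have hsymm : Q.IsSymm := by simpa using hQ.isHermitian
  have hδ : Real.sqrt (τ / 2) ^ 2 = τ / 2 := Real.sq_sqrt (by positivity)
  have hδ_inv : τ / Real.sqrt (τ / 2) = Real.sqrt (2 * τ) := by
    rw [div_eq_iff (by positivity), ← Real.sqrt_mul (by positivity),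
      show 2 * τ * (τ / 2) = τ ^ 2 by ring, Real.sqrt_sq hτ.le]
  have hnorm : (2 * Real.pi * v) ^ ((d:ℝ) / 2) * Real.sqrt (2 * Real.pi * v ^ 3)
      = (2 * Real.pi) ^ (((d:ℝ) + 1) / 2) * (v ^ (-((d:ℝ) + 1) / 2 - 1))⁻¹ := by
    have h2π : 0 < 2 * Real.pi := by positivity
    rw [← Real.rpow_neg hv.le, Real.sqrt_eq_rpow, Real.mul_rpow h2π.le hv.le,
      Real.mul_rpow h2π.le (by positivity), ← Real.rpow_natCast v 3, ← Real.rpow_mul hv.le,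
      show ((d:ℝ) + 1) / 2 = d / 2 + 1 / 2 by ring, Real.rpow_add h2π,
      show -(-((d:ℝ) + 1) / 2 - 1) = d / 2 + (3:ℕ) * (1 / 2) by push_cast; ring,
      Real.rpow_add hv]
    ring
  rw [mvnPdf_smul_inv _ _ hQ.det_pos hv, igPdf_of_pos (by positivity) hv, hδ, hδ_inv,
    sub_add_eq_sub_sub, hsymm.dotProduct_mulVec_sub_smul_s10]
  set y := x - lam
  calc _ = Real.sqrt τ * Real.sqrt Q.det /
        ((2 * Real.pi * v) ^ ((d:ℝ) / 2) * Real.sqrt (2 * Real.pi * v ^ 3)) *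
        Real.exp (-(y ⬝ᵥ (Q *ᵥ y) - 2 * v * (y ⬝ᵥ (Q *ᵥ beta)) + v ^ 2 * (beta ⬝ᵥ (Q *ᵥ beta)))
          / (2 * v) + (Real.sqrt (2 * τ) - τ / (2 * (τ / 2)) * v - τ / (2 * v))) := by
        rw [Real.exp_add]; ring
    _ = _ := by
        have hexponent : -(y ⬝ᵥ (Q *ᵥ y) - 2 * v * (y ⬝ᵥ (Q *ᵥ beta)) + v ^ 2 * (beta ⬝ᵥ (Q *ᵥ beta)))
            / (2 * v) + (Real.sqrt (2 * τ) - τ / (2 * (τ / 2)) * v - τ / (2 * v))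
            = y ⬝ᵥ (Q *ᵥ beta) + Real.sqrt (2 * τ) +
              -((beta ⬝ᵥ (Q *ᵥ beta) + 2) * v + (y ⬝ᵥ (Q *ᵥ y) + τ) / v) / 2 := by
          field_simp
          ring
        rw [hnorm, Real.sqrt_mul hτ.le, hexponent, Real.exp_add]
        field_simp

/-- The multivariate NIG density: if `X = λ + βV + √V Q^{-1/2} Z` with
`V ~ IG(τ, √(τ/2))` and `Z ~ N(0, I_d)` independent (so `X | V = v ~ N(λ + βv, v Q⁻¹)`),
then `X` has density
`f(x) = √(τ|Q|)/(2π)^{(d+1)/2} exp((x−λ)ᵀQβ + √(2τ)) · 2 K_ν(√(ab)) (b/a)^{ν/2}`,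
where `ν = −(d+1)/2`, `a = βᵀQβ + 2`, `b = (x−λ)ᵀQ(x−λ) + τ`. -/
theorem nig_density {d : ℕ} (lam beta : Fin d → ℝ) (Q : Matrix (Fin d) (Fin d) ℝ)
    (hQ : Q.PosDef) (τ : ℝ) (hτ : 0 < τ) (x : Fin d → ℝ) :
    ∫ v in Set.Ioi (0:ℝ),
        mvnPdf (lam + v • beta) (v • Q⁻¹) x * igPdf τ (Real.sqrt (τ/2)) v =
      Real.sqrt (τ * Q.det) / (2*Real.pi) ^ (((d:ℝ)+1)/2) *
        Real.exp ((x - lam) ⬝ᵥ (Q *ᵥ beta) + Real.sqrt (2*τ)) *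
        (2 * besselK (-((d:ℝ)+1)/2)
          (Real.sqrt ((beta ⬝ᵥ (Q *ᵥ beta) + 2) *
            ((x - lam) ⬝ᵥ (Q *ᵥ (x - lam)) + τ)))) *
        (((x - lam) ⬝ᵥ (Q *ᵥ (x - lam)) + τ) / (beta ⬝ᵥ (Q *ᵥ beta) + 2))
          ^ ((-((d:ℝ)+1)/2)/2) := by
  have hQ_nonneg (y : Fin d → ℝ) : 0 ≤ y ⬝ᵥ (Q *ᵥ y) := by
    simpa only [star_trivial] using hQ.posSemidef.dotProduct_mulVec_nonneg y
  have ha : 0 < beta ⬝ᵥ (Q *ᵥ beta) + 2 := by linarith [hQ_nonneg beta]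
  have hb : 0 < (x - lam) ⬝ᵥ (Q *ᵥ (x - lam)) + τ := by linarith [hQ_nonneg (x - lam)]
  rw [setIntegral_congr_fun measurableSet_Ioi fun v hv => mvnPdf_mul_igPdf lam beta x hQ hτ hv,
    integral_const_mul, integral_rpow_mul_exp_eq_besselK _ ha hb]
  ring
end

section
/- Conditional law of the NIG distribution: if X ~ NIG(λ, Q, β, τ) is partitioned as (X^A, X^B), then X^A | X^B = x^B has a generalized hyperbolic distribution GH(λ̃, Q^{AA}, β̃, ν̂, â, b̂) with λ̃ = λ^A − (Q^{AA})^{-1} Q^{AB}(x^B − λ^B), β̃ = β^A + (Q^{AA})^{-1} Q^{AB} β^B, ν̂ = −(|B|+1)/2, â = (β^B)^T (Σ^{BB})^{-1} β^B + 2, b̂ = (x^B − λ^B)^T (Σ^{BB})^{-1}(x^B − λ^B) + τ. -/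
/-!
Write `A = Q^{AA}` and `S = Q^{BB} - Q^{BA} A⁻¹ Q^{AB}` for the Schur complement, which equals
`(Σ^{BB})⁻¹`. Completing the square in the `A`-coordinates splits every bilinear form of `Q` as
`⟨s, Q t⟩ = ⟨s^A + A⁻¹Q^{AB}s^B, A (t^A + A⁻¹Q^{AB}t^B)⟩ + ⟨s^B, S t^B⟩`, and
`det Q = det A · det S`.
Substituting these into the NIG density of `X`, the NIG density of `X^B` with precision `S` splits
off, and what remains is the GH density in `x^A - λ̃`: its normaliser `K_ν̂(√(â b̂))` cancels the
Bessel factor of the marginal, which is positive because its defining integral has a positive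
integrable integrand.
-/

open MeasureTheory Real Matrix

/-- The multivariate NIG(λ, Q, β, τ) density on `ι → ℝ`. -/
noncomputable def nigPdf {ι : Type*} [Fintype ι] [DecidableEq ι]
    (lam : ι → ℝ) (Q : Matrix ι ι ℝ) (beta : ι → ℝ) (τ : ℝ) (x : ι → ℝ) : ℝ :=
  Real.sqrt (τ * Q.det) / (2*Real.pi) ^ (((Fintype.card ι : ℝ)+1)/2) *
    Real.exp ((x - lam) ⬝ᵥ (Q *ᵥ beta) + Real.sqrt (2*τ)) *
    (2 * besselK (-((Fintype.card ι : ℝ)+1)/2)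
      (Real.sqrt ((beta ⬝ᵥ (Q *ᵥ beta) + 2) * ((x - lam) ⬝ᵥ (Q *ᵥ (x - lam)) + τ)))) *
    (((x - lam) ⬝ᵥ (Q *ᵥ (x - lam)) + τ) / (beta ⬝ᵥ (Q *ᵥ beta) + 2))
      ^ ((-((Fintype.card ι : ℝ)+1)/2)/2)

/-- The generalized hyperbolic GH(μ, P, γ, ν, a, b) density (precision matrix `P`):
the law of `μ + γW + √W P^{-1/2} Z'` with `W ~ GIG(ν, a, b)` and `Z'` standard Gaussian. -/
noncomputable def ghPdf {ι : Type*} [Fintype ι] [DecidableEq ι]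
    (mu : ι → ℝ) (P : Matrix ι ι ℝ) (gam : ι → ℝ) (ν a b : ℝ) (x : ι → ℝ) : ℝ :=
  Real.sqrt P.det / (2*Real.pi) ^ ((Fintype.card ι : ℝ)/2) * (a/b) ^ (ν/2) *
    Real.exp ((x - mu) ⬝ᵥ (P *ᵥ gam)) *
    (((x - mu) ⬝ᵥ (P *ᵥ (x - mu)) + b) / (gam ⬝ᵥ (P *ᵥ gam) + a))
      ^ ((ν - (Fintype.card ι : ℝ)/2)/2) *
    besselK (ν - (Fintype.card ι : ℝ)/2)
      (Real.sqrt ((gam ⬝ᵥ (P *ᵥ gam) + a) * ((x - mu) ⬝ᵥ (P *ᵥ (x - mu)) + b))) /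
    besselK ν (Real.sqrt (a*b))

lemma Sum.elim_sub_elim {α β γ : Type*} [Sub γ] (f f' : α → γ) (g g' : β → γ) :
    Sum.elim f g - Sum.elim f' g' = Sum.elim (f - f') (g - g') := by
  ext (_ | _) <;> rfl

namespace Matrix

variable {m n α : Type*} [Fintype m] [Fintype n] [DecidableEq m] [CommRing α]

lemma IsSymm.sumElim_dotProduct_mulVec_sumElim {Q : Matrix (m ⊕ n) (m ⊕ n) α} (hQ : Q.IsSymm)
    (hA : IsUnit Q.toBlocks₁₁.det) (sA tA : m → α) (sB tB : n → α) :
    Sum.elim sA sB ⬝ᵥ (Q *ᵥ Sum.elim tA tB)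
      = (sA + Q.toBlocks₁₁⁻¹ *ᵥ (Q.toBlocks₁₂ *ᵥ sB))
          ⬝ᵥ (Q.toBlocks₁₁ *ᵥ (tA + Q.toBlocks₁₁⁻¹ *ᵥ (Q.toBlocks₁₂ *ᵥ tB)))
        + sB ⬝ᵥ ((Q.toBlocks₂₂ - Q.toBlocks₂₁ * Q.toBlocks₁₁⁻¹ * Q.toBlocks₁₂) *ᵥ tB) := by
  set A := Q.toBlocks₁₁
  set B := Q.toBlocks₁₂
  obtain ⟨hAs, hBC, -, -⟩ := isSymm_fromBlocks_iff.1 ((fromBlocks_toBlocks Q).symm ▸ hQ)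
  have hAinv : (A⁻¹)ᵀ = A⁻¹ := by rw [transpose_nonsing_inv, hAs.eq]
  have hAAinv (v : m → α) : A *ᵥ (A⁻¹ *ᵥ v) = v := by
    rw [mulVec_mulVec, mul_nonsing_inv _ hA, one_mulVec]
  have hAinvA (v : m → α) : A⁻¹ *ᵥ (A *ᵥ v) = v := by
    rw [mulVec_mulVec, nonsing_inv_mul _ hA, one_mulVec]
  have hAinv_left (u v : m → α) : (A⁻¹ *ᵥ u) ⬝ᵥ v = u ⬝ᵥ (A⁻¹ *ᵥ v) := by
    rw [dotProduct_comm, ← dotProduct_transpose_mulVec, hAinv]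
  have hB_left (u : n → α) (v : m → α) : (B *ᵥ u) ⬝ᵥ v = u ⬝ᵥ (Bᵀ *ᵥ v) := by
    rw [dotProduct_comm, ← dotProduct_transpose_mulVec]
  rw [← fromBlocks_toBlocks Q, ← hBC]
  simp only [fromBlocks_mulVec, sumElim_dotProduct_sumElim, Sum.elim_comp_inl, Sum.elim_comp_inr,
    mulVec_add, hAAinv, hAinvA, sub_mulVec, add_dotProduct, dotProduct_add, dotProduct_sub,
    hAinv_left, hB_left, ← mulVec_mulVec, toBlocks_fromBlocks₂₁, toBlocks_fromBlocks₂₂]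
  ring

variable [DecidableEq n]

lemma inv_toBlocks₂₂_inv {Q : Matrix (m ⊕ n) (m ⊕ n) α} (hQ : IsUnit Q.det)
    (hA : IsUnit Q.toBlocks₁₁.det) :
    (Q⁻¹.toBlocks₂₂)⁻¹ = Q.toBlocks₂₂ - Q.toBlocks₂₁ * Q.toBlocks₁₁⁻¹ * Q.toBlocks₁₂ := by
  let := Q.toBlocks₁₁.invertibleOfIsUnitDet hA
  have hS : IsUnit (Q.toBlocks₂₂ - Q.toBlocks₂₁ * ⅟Q.toBlocks₁₁ * Q.toBlocks₁₂).det := by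
    rw [← fromBlocks_toBlocks Q, det_fromBlocks₁₁] at hQ
    exact isUnit_of_mul_isUnit_right hQ
  let := invertibleOfIsUnitDet _ hS
  let : Invertible (fromBlocks Q.toBlocks₁₁ Q.toBlocks₁₂ Q.toBlocks₂₁ Q.toBlocks₂₂) := by
    rw [fromBlocks_toBlocks]; exact Q.invertibleOfIsUnitDet hQ
  have h := congrArg toBlocks₂₂ <|
    invOf_fromBlocks₁₁_eq Q.toBlocks₁₁ Q.toBlocks₁₂ Q.toBlocks₂₁ Q.toBlocks₂₂
  rw [toBlocks_fromBlocks₂₂, invOf_eq_nonsing_inv, invOf_eq_nonsing_inv, fromBlocks_toBlocks] at h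
  rw [h, inv_inv_of_invertible, invOf_eq_nonsing_inv]

lemma det_eq_det_toBlocks₁₁_mul_det_inv_toBlocks₂₂_inv {Q : Matrix (m ⊕ n) (m ⊕ n) α}
    (hQ : IsUnit Q.det) (hA : IsUnit Q.toBlocks₁₁.det) :
    Q.det = Q.toBlocks₁₁.det * (Q⁻¹.toBlocks₂₂)⁻¹.det := by
  let := Q.toBlocks₁₁.invertibleOfIsUnitDet hA
  conv_lhs => rw [← fromBlocks_toBlocks Q]
  rw [det_fromBlocks₁₁, inv_toBlocks₂₂_inv hQ hA, invOf_eq_nonsing_inv]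

end Matrix

lemma Real.exp_neg_le_factorial_div_pow {x : ℝ} (hx : 0 < x) (n : ℕ) :
    Real.exp (-x) ≤ n.factorial / x ^ n := by
  rw [Real.exp_neg, le_div_iff₀ (by positivity), inv_mul_le_iff₀ (Real.exp_pos x)]
  have := Real.pow_div_factorial_le_exp x hx.le n
  rw [div_le_iff₀ (by positivity)] at this
  linarith

lemma integrableOn_besselK_integrand (c : ℝ) {z : ℝ} (hz : z ≠ 0) :
    IntegrableOn (fun t : ℝ => t ^ c * Real.exp (-t - z ^ 2 / (4 * t))) (Set.Ioi 0) := by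
  -- `exp (-z²/4t) ≤ n! (4t/z²)ⁿ` dominates the integrand by a Gamma integrand of exponent `c + n`.
  set n := ⌈-c⌉₊
  have hn : 0 < c + n + 1 := by linarith [Nat.le_ceil (-c)]
  refine ((Real.GammaIntegral_convergent hn).const_mul (n.factorial * (4 / z ^ 2) ^ n)).mono'
    (by fun_prop) ?_
  filter_upwards [ae_restrict_mem measurableSet_Ioi] with t (ht : 0 < t)
  have hw : 0 < z ^ 2 / (4 * t) := by positivity
  rw [Real.norm_eq_abs, abs_of_nonneg (by positivity), sub_eq_add_neg, Real.exp_add,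
    add_sub_cancel_right, Real.rpow_add ht, Real.rpow_natCast]
  calc t ^ c * (Real.exp (-t) * Real.exp (-(z ^ 2 / (4 * t))))
      ≤ t ^ c * (Real.exp (-t) * (n.factorial / (z ^ 2 / (4 * t)) ^ n)) := by
        gcongr; exact Real.exp_neg_le_factorial_div_pow hw n
    _ = n.factorial * (4 / z ^ 2) ^ n * (Real.exp (-t) * (t ^ c * t ^ n)) := by
        rw [div_pow, div_pow, mul_pow]
        field_simp

lemma besselK_pos (ν : ℝ) {z : ℝ} (hz : 0 < z) : 0 < besselK ν z := by
  refine mul_pos (by positivity) ?_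
  rw [setIntegral_pos_iff_support_of_nonneg_ae ?_ (integrableOn_besselK_integrand _ hz.ne')]
  · have hsupp : Function.support (fun t : ℝ => t ^ (-ν - 1) * Real.exp (-t - z ^ 2 / (4 * t)))
        ∩ Set.Ioi 0 = Set.Ioi 0 :=
      Set.inter_eq_right.2 fun t (ht : 0 < t) => by simp only [Function.mem_support]; positivity
    rw [hsupp, Real.volume_Ioi]
    exact ENNReal.zero_lt_top
  · filter_upwards [ae_restrict_mem measurableSet_Ioi] with t (ht : 0 < t)
    positivity

/- `q`, `p` and `L` are the `A`- and `B`-parts of `(x - λ)ᵀQ(x - λ)`, `βᵀQβ` and `(x - λ)ᵀQβ`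
in the splitting `Matrix.IsSymm.sumElim_dotProduct_mulVec_sumElim`, and `detS` is the determinant
of the Schur complement. -/
lemma nig_density_split (dA dB : ℕ) {τ detA : ℝ} (detS qA pA LA qB pB LB : ℝ)
    (hτ : 0 < τ) (hdetA : 0 < detA) (hqB : 0 ≤ qB) (hpB : 0 ≤ pB) :
    √(τ * (detA * detS)) / (2 * π) ^ ((dA + dB + 1 : ℝ) / 2) * exp (LA + LB + √(2 * τ)) *
        (2 * besselK (-(dA + dB + 1 : ℝ) / 2) √((pA + pB + 2) * (qA + qB + τ))) *
        ((qA + qB + τ) / (pA + pB + 2)) ^ (-(dA + dB + 1 : ℝ) / 2 / 2) =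
      (√(τ * detS) / (2 * π) ^ ((dB + 1 : ℝ) / 2) * exp (LB + √(2 * τ)) *
          (2 * besselK (-(dB + 1 : ℝ) / 2) √((pB + 2) * (qB + τ))) *
          ((qB + τ) / (pB + 2)) ^ (-(dB + 1 : ℝ) / 2 / 2)) *
        (√detA / (2 * π) ^ ((dA : ℝ) / 2) * ((pB + 2) / (qB + τ)) ^ (-(dB + 1 : ℝ) / 2 / 2) *
            exp LA *
            ((qA + (qB + τ)) / (pA + (pB + 2))) ^ ((-(dB + 1 : ℝ) / 2 - dA / 2) / 2) *
            besselK (-(dB + 1 : ℝ) / 2 - dA / 2) √((pA + (pB + 2)) * (qA + (qB + τ))) /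
          besselK (-(dB + 1 : ℝ) / 2) √((pB + 2) * (qB + τ))) := by
  have hK : 0 < besselK (-(dB + 1 : ℝ) / 2) √((pB + 2) * (qB + τ)) :=
    besselK_pos _ (by positivity)
  have hX : 0 < ((qB + τ) / (pB + 2)) ^ (-(dB + 1 : ℝ) / 2 / 2) := by positivity
  rw [← inv_div (qB + τ), Real.inv_rpow (by positivity), add_assoc qA, add_assoc pA,
    show τ * (detA * detS) = detA * (τ * detS) by ring, Real.sqrt_mul hdetA.le,
    show (dA + dB + 1 : ℝ) / 2 = (dB + 1) / 2 + dA / 2 by ring, Real.rpow_add (by positivity),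
    show LA + LB + √(2 * τ) = (LB + √(2 * τ)) + LA by ring, Real.exp_add,
    show -(dA + dB + 1 : ℝ) / 2 = -(dB + 1) / 2 - dA / 2 by ring]
  generalize besselK (-(dB + 1 : ℝ) / 2) √((pB + 2) * (qB + τ)) = K at hK ⊢
  generalize ((qB + τ) / (pB + 2)) ^ (-(dB + 1 : ℝ) / 2 / 2) = X at hX ⊢
  field_simp

/-- Conditional law of the NIG distribution: for `X ~ NIG(λ, Q, β, τ)` partitioned as
`(X^A, X^B)`, the conditional density of `X^A` given `X^B = x^B` is the
GH(λ̃, Q^{AA}, β̃, ν̂, â, b̂) density, i.e. the joint NIG density factors as the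
`B`-marginal NIG density times this GH density.  Here
`λ̃ = λ^A − (Q^{AA})⁻¹ Q^{AB}(x^B − λ^B)`, `β̃ = β^A + (Q^{AA})⁻¹ Q^{AB} β^B`,
`ν̂ = −(|B|+1)/2`, `â = (β^B)ᵀ(Σ^{BB})⁻¹β^B + 2`,
`b̂ = (x^B − λ^B)ᵀ(Σ^{BB})⁻¹(x^B − λ^B) + τ`, with `Σ = Q⁻¹`. -/
theorem nig_conditional_law {dA dB : ℕ}
    (lam beta : (Fin dA ⊕ Fin dB) → ℝ)
    (Q : Matrix (Fin dA ⊕ Fin dB) (Fin dA ⊕ Fin dB) ℝ) (hQ : Q.PosDef)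
    (τ : ℝ) (hτ : 0 < τ) (xA : Fin dA → ℝ) (xB : Fin dB → ℝ) :
    nigPdf lam Q beta τ (Sum.elim xA xB) =
      nigPdf (fun j => lam (Sum.inr j)) ((Q⁻¹.toBlocks₂₂)⁻¹)
          (fun j => beta (Sum.inr j)) τ xB *
        ghPdf
          ((fun i => lam (Sum.inl i)) -
            (Q.toBlocks₁₁)⁻¹ *ᵥ (Q.toBlocks₁₂ *ᵥ (xB - fun j => lam (Sum.inr j))))
          Q.toBlocks₁₁
          ((fun i => beta (Sum.inl i)) +
            (Q.toBlocks₁₁)⁻¹ *ᵥ (Q.toBlocks₁₂ *ᵥ (fun j => beta (Sum.inr j))))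
          (-((dB : ℝ)+1)/2)
          ((fun j => beta (Sum.inr j)) ⬝ᵥ
            ((Q⁻¹.toBlocks₂₂)⁻¹ *ᵥ (fun j => beta (Sum.inr j))) + 2)
          ((xB - fun j => lam (Sum.inr j)) ⬝ᵥ
            ((Q⁻¹.toBlocks₂₂)⁻¹ *ᵥ (xB - fun j => lam (Sum.inr j))) + τ)
          xA := by
  set lA : Fin dA → ℝ := fun i => lam (Sum.inl i)
  set lB : Fin dB → ℝ := fun j => lam (Sum.inr j)
  set bA : Fin dA → ℝ := fun i => beta (Sum.inl i)
  set bB : Fin dB → ℝ := fun j => beta (Sum.inr j)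
  have hlam : lam = Sum.elim lA lB := (Sum.elim_comp_inl_inr lam).symm
  have hbeta : beta = Sum.elim bA bB := (Sum.elim_comp_inl_inr beta).symm
  have hA : Q.toBlocks₁₁.PosDef := hQ.submatrix Sum.inl_injective
  have hS : (Q⁻¹.toBlocks₂₂)⁻¹.PosDef := (hQ.inv.submatrix Sum.inr_injective).inv
  have hQdet : IsUnit Q.det := hQ.det_pos.ne'.isUnit
  have hAdet : IsUnit Q.toBlocks₁₁.det := hA.det_pos.ne'.isUnit
  have hsplit := (isHermitian_iff_isSymm.1 hQ.1).sumElim_dotProduct_mulVec_sumElim hAdet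
  rw [← inv_toBlocks₂₂_inv hQdet hAdet] at hsplit
  have hb := hS.posSemidef.dotProduct_mulVec_nonneg (xB - lB)
  have hp := hS.posSemidef.dotProduct_mulVec_nonneg bB
  simp only [nigPdf, ghPdf, Fintype.card_sum, Fintype.card_fin, Nat.cast_add,
    det_eq_det_toBlocks₁₁_mul_det_inv_toBlocks₂₂_inv hQdet hAdet,
    hlam, hbeta, Sum.elim_sub_elim, ← sub_add, hsplit]
  simp only [star_trivial] at hb hp
  exact nig_density_split dA dB _ _ _ _ _ _ _ hτ hA.det_pos hb hp
end
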